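/- arXiv:2404.01947 — 3 statements merged into one kernel-verified Lean document; each statement's English description precedes it below -/
import Mathlib

section
/- Let n ≥ 1 and let u : ℂⁿ → ℂ be measurable with ∫_{|z|<r₁} |u(z)|² dv_z < ∞ for some r₁ > 0, and suppose u vanishes to infinite order in the L² sense at 0. Then for every M > 0, the function z ↦ u(z)/|z|^M is square integrable on some ball {|z| < r} with r > 0, and it vanishes to infinite order in the L² sense at 0. -/
/-!
Cut the ball `‖z‖ < r` into the dyadic shells `r / 2 ^ (k + 1) ≤ ‖z‖ < r / 2 ^ k`. On the `k`-th
shell the weight `‖z‖ ^ (-2M)` is at most `(r / 2 ^ (k + 1)) ^ (-2M)`, and flatness bounds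
`∫_{‖z‖ < r / 2 ^ k} ‖u‖²` by `(r / 2 ^ k) ^ N` for any `N` once `r` is small. For `N > 2M` the
resulting geometric series sums to `C r ^ (N - 2M)`, and `N` is arbitrary.
-/

open MeasureTheory Metric Filter Topology

noncomputable section

/-- The Borel σ-algebra on `ℂⁿ` (as `EuclideanSpace`). -/
instance (n : ℕ) : MeasurableSpace (EuclideanSpace ℂ (Fin n)) := MeasurableSpace.comap WithLp.ofLp MeasurableSpace.pi

instance (n : ℕ) : BorelSpace (EuclideanSpace ℂ (Fin n)) := PiLp.borelSpace 2 (X := fun _ : Fin n => ℂ)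

/-- Lebesgue measure on `ℂⁿ ≅ ℝ^{2n}` (as `EuclideanSpace`). -/
instance (n : ℕ) : MeasureSpace (EuclideanSpace ℂ (Fin n)) :=
  ⟨(volume : Measure (Fin n → ℂ)).map (WithLp.equiv 2 (Fin n → ℂ)).symm⟩

open Set
open scoped ENNReal

theorem exists_dyadic_shell {x r : ℝ} (hx : 0 < x) (hxr : x < r) :
    ∃ k : ℕ, r / 2 ^ (k + 1) ≤ x ∧ x < r / 2 ^ k := by
  have hr : 0 < r := hx.trans hxr
  have hex : ∃ k : ℕ, r / 2 ^ (k + 1) ≤ x := by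
    obtain ⟨k, hk⟩ := exists_pow_lt_of_lt_one (div_pos hx hr) (by norm_num : (2 : ℝ)⁻¹ < 1)
    refine ⟨k, ?_⟩
    rw [lt_div_iff₀ hr, inv_pow, inv_mul_eq_div] at hk
    exact (div_le_div_of_nonneg_left hr.le (by positivity)
      (pow_le_pow_right₀ one_le_two k.le_succ)).trans hk.le
  refine ⟨Nat.find hex, Nat.find_spec hex, ?_⟩
  cases h : Nat.find hex with
  | zero => simpa using hxr
  | succ j => exact not_le.mp (Nat.find_min hex (h ▸ j.lt_succ_self))

theorem rpow_neg_div_two_pow_succ_mul_rpow_div_two_pow {r : ℝ} (hr : 0 < r) (q p : ℝ) (k : ℕ) :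
    (r / 2 ^ (k + 1)) ^ (-q) * (r / 2 ^ k) ^ p = 2 ^ q * r ^ (p - q) * (2 ^ (q - p)) ^ k := by
  have h₁ : 0 < r / 2 ^ (k + 1) := by positivity
  have h₂ : 0 < r / 2 ^ k := by positivity
  rw [← Real.rpow_natCast (2 ^ (q - p)), ← Real.rpow_mul zero_le_two]
  simp only [Real.rpow_def_of_pos, h₁, h₂, hr, two_pos, ← Real.exp_add,
    Real.log_div hr.ne' (pow_pos two_pos _).ne', Real.log_pow]
  push_cast
  ring_nf

theorem ENNReal.tsum_ofReal_mul_geometric {a c : ℝ} (ha : 0 ≤ a) (hc₀ : 0 ≤ c) (hc₁ : c < 1) :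
    ∑' k : ℕ, ENNReal.ofReal (a * c ^ k) = ENNReal.ofReal (a / (1 - c)) := by
  rw [← ENNReal.ofReal_tsum_of_nonneg (fun k => by positivity)
    ((summable_geometric_of_lt_one hc₀ hc₁).mul_left a), tsum_mul_left,
    tsum_geometric_of_lt_one hc₀ hc₁, div_eq_mul_inv]

theorem eventually_le_pow_of_tendsto_div_pow {F : ℝ → ℝ} {m : ℕ}
    (h : Tendsto (fun r => F r / r ^ m) (𝓝[>] 0) (𝓝 0)) : ∀ᶠ r in 𝓝[>] 0, F r ≤ r ^ m := by
  filter_upwards [h.eventually_lt_const one_pos, self_mem_nhdsWithin] with r hr (hr₀ : 0 < r)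
  exact ((div_lt_one (by positivity)).1 hr).le

theorem tendsto_div_pow_of_eventually_le_rpow {F : ℝ → ℝ} {C s : ℝ} {m : ℕ} (hs : m < s)
    (h₀ : ∀ᶠ r in 𝓝[>] 0, 0 ≤ F r) (hF : ∀ᶠ r in 𝓝[>] 0, F r ≤ C * r ^ s) :
    Tendsto (fun r => F r / r ^ m) (𝓝[>] 0) (𝓝 0) := by
  have hlim : Tendsto (fun r : ℝ => C * r ^ (s - m)) (𝓝[>] 0) (𝓝 0) := by
    have := ((Real.continuousAt_rpow_const 0 (s - m) (Or.inr (by linarith))).const_mul C).tendsto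
    simpa [Real.zero_rpow (sub_pos.2 hs).ne'] using this.mono_left nhdsWithin_le_nhds
  refine squeeze_zero' ?_ ?_ hlim
  · filter_upwards [h₀, self_mem_nhdsWithin] with r hFr (hr : 0 < r)
    positivity
  · filter_upwards [hF, self_mem_nhdsWithin] with r hFr (hr : 0 < r)
    calc F r / r ^ m ≤ C * r ^ s / r ^ m := by gcongr
      _ = C * r ^ (s - m) := by rw [mul_div_assoc, ← Real.rpow_natCast, ← Real.rpow_sub hr]

theorem eventually_forall_Ioc_of_eventually_nhdsGT {P : ℝ → Prop} (h : ∀ᶠ x in 𝓝[>] 0, P x) :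
    ∀ᶠ x in 𝓝[>] 0, ∀ y ∈ Ioc 0 x, P y := by
  obtain ⟨ε, hε, hsub⟩ := mem_nhdsGT_iff_exists_Ioo_subset.1 h
  filter_upwards [Ioo_mem_nhdsGT hε] with x hx y hy using hsub ⟨hy.1, hy.2.trans_lt hx.2⟩

section

variable {E : Type*} [SeminormedAddCommGroup E] [MeasurableSpace E] [OpensMeasurableSpace E]
  {μ : Measure E}

def BallIntegralVanishesToInfiniteOrder (μ : Measure E) (f : E → ℝ) : Prop :=
  ∀ m : ℕ, 1 ≤ m → Tendsto (fun r : ℝ => (∫ z in ball 0 r, f z ∂μ) / r ^ m) (𝓝[>] 0) (𝓝 0)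

theorem setLIntegral_ball_diff_ball_rpow_neg_mul_le (g : E → ℝ≥0∞) {q t : ℝ} (hq : 0 ≤ q)
    (ht : 0 < t) (ρ : ℝ) :
    ∫⁻ z in ball 0 ρ \ ball 0 t, ENNReal.ofReal (‖z‖ ^ (-q)) * g z ∂μ
      ≤ ENNReal.ofReal (t ^ (-q)) * ∫⁻ z in ball 0 ρ, g z ∂μ := by
  calc ∫⁻ z in ball 0 ρ \ ball 0 t, ENNReal.ofReal (‖z‖ ^ (-q)) * g z ∂μ
      ≤ ∫⁻ z in ball 0 ρ \ ball 0 t, ENNReal.ofReal (t ^ (-q)) * g z ∂μ := by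
        refine setLIntegral_mono' (measurableSet_ball.diff measurableSet_ball) fun z hz => ?_
        have htz : t ≤ ‖z‖ := by simpa using hz.2
        gcongr ?_ * _
        exact ENNReal.ofReal_le_ofReal (Real.rpow_le_rpow_of_nonpos ht htz (neg_nonpos.2 hq))
    _ = ENNReal.ofReal (t ^ (-q)) * ∫⁻ z in ball 0 ρ \ ball 0 t, g z ∂μ :=
        lintegral_const_mul' _ _ ENNReal.ofReal_ne_top
    _ ≤ ENNReal.ofReal (t ^ (-q)) * ∫⁻ z in ball 0 ρ, g z ∂μ := by
        gcongr
        exact sdiff_subset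

theorem setLIntegral_ball_rpow_neg_mul_le {g : E → ℝ≥0∞} {q p r : ℝ} (hq : 0 < q) (hqp : q < p)
    (hr : 0 < r) (hg : ∀ ρ ∈ Ioc 0 r, ∫⁻ z in ball 0 ρ, g z ∂μ ≤ ENNReal.ofReal (ρ ^ p)) :
    ∫⁻ z in ball 0 r, ENNReal.ofReal (‖z‖ ^ (-q)) * g z ∂μ
      ≤ ENNReal.ofReal (2 ^ q / (1 - 2 ^ (q - p)) * r ^ (p - q)) := by
  set A : ℕ → Set E := fun k => ball 0 (r / 2 ^ k) \ ball 0 (r / 2 ^ (k + 1))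
  have hcover : ball (0 : E) r ⊆ closedBall 0 0 ∪ ⋃ k, A k := by
    intro z hz
    rcases (norm_nonneg z).eq_or_lt with hz0 | hz0
    · exact Or.inl (by simpa using hz0.symm.le)
    · obtain ⟨k, hk₁, hk₂⟩ := exists_dyadic_shell hz0 (mem_ball_zero_iff.1 hz)
      exact Or.inr (mem_iUnion.2 ⟨k, by simpa [A] using ⟨hk₂, hk₁⟩⟩)
  have hcenter : ∫⁻ z in closedBall 0 0, ENNReal.ofReal (‖z‖ ^ (-q)) * g z ∂μ = 0 := by
    refine nonpos_iff_eq_zero.1 ((setLIntegral_mono' measurableSet_closedBall fun z hz => ?_).trans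
      lintegral_zero.le)
    -- `rpow` has `0 ^ (-q) = 0`, so the weight kills the centre.
    rw [(mem_closedBall_zero_iff.1 hz).antisymm (norm_nonneg z),
      Real.zero_rpow (neg_ne_zero.2 hq.ne')]
    simp
  have hshell : ∀ k, ∫⁻ z in A k, ENNReal.ofReal (‖z‖ ^ (-q)) * g z ∂μ
      ≤ ENNReal.ofReal (2 ^ q * r ^ (p - q) * (2 ^ (q - p)) ^ k) := fun k => by
    calc _ ≤ ENNReal.ofReal ((r / 2 ^ (k + 1)) ^ (-q)) * ∫⁻ z in ball 0 (r / 2 ^ k), g z ∂μ :=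
          setLIntegral_ball_diff_ball_rpow_neg_mul_le g hq.le (by positivity) _
      _ ≤ ENNReal.ofReal ((r / 2 ^ (k + 1)) ^ (-q)) * ENNReal.ofReal ((r / 2 ^ k) ^ p) := by
          gcongr
          exact hg _ ⟨by positivity, div_le_self hr.le (one_le_pow₀ one_le_two)⟩
      _ = _ := by
          rw [← ENNReal.ofReal_mul (by positivity),
            rpow_neg_div_two_pow_succ_mul_rpow_div_two_pow hr]
  calc ∫⁻ z in ball 0 r, ENNReal.ofReal (‖z‖ ^ (-q)) * g z ∂μ
      ≤ ∫⁻ z in closedBall 0 0, ENNReal.ofReal (‖z‖ ^ (-q)) * g z ∂μ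
          + ∫⁻ z in ⋃ k, A k, ENNReal.ofReal (‖z‖ ^ (-q)) * g z ∂μ :=
        (lintegral_mono_set hcover).trans (lintegral_union_le _ _ _)
    _ ≤ ∑' k, ENNReal.ofReal (2 ^ q * r ^ (p - q) * (2 ^ (q - p)) ^ k) := by
        rw [hcenter, zero_add]
        exact (lintegral_iUnion_le _ _).trans (ENNReal.tsum_le_tsum hshell)
    _ = ENNReal.ofReal (2 ^ q / (1 - 2 ^ (q - p)) * r ^ (p - q)) := by
        rw [ENNReal.tsum_ofReal_mul_geometric (by positivity) (by positivity)
          (Real.rpow_lt_one_of_one_lt_of_neg one_lt_two (by linarith))]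
        ring_nf

theorem integrableOn_ball_rpow_neg_mul_and_integral_le {f : E → ℝ} (hf₀ : 0 ≤ f) {q p r : ℝ}
    (hq : 0 < q) (hqp : q < p) (hr : 0 < r) (hf : IntegrableOn f (ball 0 r) μ)
    (hbound : ∀ ρ ∈ Ioc 0 r, ∫ z in ball 0 ρ, f z ∂μ ≤ ρ ^ p) :
    IntegrableOn (fun z => ‖z‖ ^ (-q) * f z) (ball 0 r) μ ∧
      ∫ z in ball 0 r, ‖z‖ ^ (-q) * f z ∂μ ≤ 2 ^ q / (1 - 2 ^ (q - p)) * r ^ (p - q) := by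
  have hnonneg : 0 ≤ᵐ[μ.restrict (ball 0 r)] fun z => ‖z‖ ^ (-q) * f z :=
    ae_of_all _ fun z => mul_nonneg (by positivity) (hf₀ z)
  have hlintegral : ∫⁻ z in ball 0 r, ENNReal.ofReal (‖z‖ ^ (-q) * f z) ∂μ
      ≤ ENNReal.ofReal (2 ^ q / (1 - 2 ^ (q - p)) * r ^ (p - q)) := by
    simp only [ENNReal.ofReal_mul (Real.rpow_nonneg (norm_nonneg _) _)]
    refine setLIntegral_ball_rpow_neg_mul_le hq hqp hr fun ρ hρ => ?_
    rw [← ofReal_integral_eq_lintegral_ofReal (hf.mono_set (ball_subset_ball hρ.2))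
      (ae_of_all _ hf₀)]
    exact ENNReal.ofReal_le_ofReal (hbound ρ hρ)
  have hmeas : AEStronglyMeasurable (fun z => ‖z‖ ^ (-q) * f z) (μ.restrict (ball 0 r)) :=
    (continuous_norm.measurable.pow_const _).aestronglyMeasurable.mul hf.aestronglyMeasurable
  refine ⟨⟨hmeas, (hasFiniteIntegral_iff_ofReal hnonneg).2
    (hlintegral.trans_lt ENNReal.ofReal_lt_top)⟩, ?_⟩
  rw [integral_eq_lintegral_of_nonneg_ae hnonneg hmeas]
  have hratio : (2 : ℝ) ^ (q - p) < 1 := Real.rpow_lt_one_of_one_lt_of_neg one_lt_two (by linarith)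
  exact ENNReal.toReal_le_of_le_ofReal
    (mul_nonneg (div_nonneg (by positivity) (sub_nonneg.2 hratio.le)) (by positivity)) hlintegral

theorem eventually_integrableOn_ball_rpow_neg_mul_and_integral_le {f : E → ℝ} (hf₀ : 0 ≤ f)
    {r₁ : ℝ} (hr₁ : 0 < r₁) (hf : IntegrableOn f (ball 0 r₁) μ) {q : ℝ} (hq : 0 < q) {N : ℕ}
    (hqN : q < N) (hN : Tendsto (fun r => (∫ z in ball 0 r, f z ∂μ) / r ^ N) (𝓝[>] 0) (𝓝 0)) :
    ∀ᶠ r in 𝓝[>] 0, IntegrableOn (fun z => ‖z‖ ^ (-q) * f z) (ball 0 r) μ ∧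
      ∫ z in ball 0 r, ‖z‖ ^ (-q) * f z ∂μ ≤ 2 ^ q / (1 - 2 ^ (q - N)) * r ^ (N - q) := by
  have hsmall : ∀ᶠ ρ in 𝓝[>] 0, IntegrableOn f (ball 0 ρ) μ ∧ ∫ z in ball 0 ρ, f z ∂μ ≤ ρ ^ N := by
    filter_upwards [Ioo_mem_nhdsGT hr₁, eventually_le_pow_of_tendsto_div_pow hN] with ρ hρ hρN
    exact ⟨hf.mono_set (ball_subset_ball hρ.2.le), hρN⟩
  filter_upwards [eventually_forall_Ioc_of_eventually_nhdsGT hsmall, self_mem_nhdsWithin]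
    with r hr (hr₀ : 0 < r)
  exact integrableOn_ball_rpow_neg_mul_and_integral_le hf₀ hq hqN hr₀ (hr r ⟨hr₀, le_rfl⟩).1
    fun ρ hρ => by exact_mod_cast (hr ρ hρ).2

theorem BallIntegralVanishesToInfiniteOrder.rpow_neg_mul {f : E → ℝ}
    (hflat : BallIntegralVanishesToInfiniteOrder μ f) (hf₀ : 0 ≤ f) {r₁ : ℝ} (hr₁ : 0 < r₁)
    (hf : IntegrableOn f (ball 0 r₁) μ) {q : ℝ} (hq : 0 < q) :
    (∃ r, 0 < r ∧ IntegrableOn (fun z => ‖z‖ ^ (-q) * f z) (ball 0 r) μ) ∧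
      BallIntegralVanishesToInfiniteOrder μ fun z => ‖z‖ ^ (-q) * f z := by
  have hbound (N : ℕ) (hqN : q < N) := eventually_integrableOn_ball_rpow_neg_mul_and_integral_le
    hf₀ hr₁ hf hq hqN (hflat N (Nat.cast_pos.1 (hq.trans hqN)))
  have hqN (m : ℕ) : q + m < (m + ⌈q⌉₊ + 1 : ℕ) := by push_cast; linarith [Nat.le_ceil q]
  have hqN' (m : ℕ) : q < (m + ⌈q⌉₊ + 1 : ℕ) :=
    (le_add_of_nonneg_right m.cast_nonneg).trans_lt (hqN m)
  refine ⟨((hbound _ (hqN' 0)).and self_mem_nhdsWithin).exists.imp fun r h => ⟨h.2, h.1.1⟩,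
    fun m _ => ?_⟩
  exact tendsto_div_pow_of_eventually_le_rpow (by linarith [hqN m])
    (Eventually.of_forall fun r => integral_nonneg fun z => mul_nonneg (by positivity) (hf₀ z))
    ((hbound _ (hqN' m)).mono fun r h => h.2)

end

theorem stmt4_general (n : ℕ) (u : EuclideanSpace ℂ (Fin n) → ℂ) (r₁ : ℝ) (hr₁ : 0 < r₁)
    (hint : IntegrableOn (fun z => ‖u z‖ ^ 2) (ball (0 : EuclideanSpace ℂ (Fin n)) r₁))
    (hflat : ∀ m : ℕ, 1 ≤ m →
      Tendsto (fun r : ℝ => (∫ z in ball (0 : EuclideanSpace ℂ (Fin n)) r, ‖u z‖ ^ 2) / r ^ m)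
        (𝓝[>] 0) (𝓝 0)) :
    ∀ M : ℝ, 0 < M →
      (∃ r : ℝ, 0 < r ∧
        IntegrableOn (fun z => ‖(‖z‖ ^ M)⁻¹ • u z‖ ^ 2)
          (ball (0 : EuclideanSpace ℂ (Fin n)) r)) ∧
      (∀ m : ℕ, 1 ≤ m →
        Tendsto
          (fun r : ℝ =>
            (∫ z in ball (0 : EuclideanSpace ℂ (Fin n)) r, ‖(‖z‖ ^ M)⁻¹ • u z‖ ^ 2) / r ^ m)
          (𝓝[>] 0) (𝓝 0)) := by
  intro M hM
  have hweight (z : EuclideanSpace ℂ (Fin n)) :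
      ‖(‖z‖ ^ M)⁻¹ • u z‖ ^ 2 = ‖z‖ ^ (-(2 * M)) * ‖u z‖ ^ 2 := by
    rw [norm_smul, mul_pow, Real.norm_of_nonneg (by positivity), Real.rpow_neg (norm_nonneg z),
      mul_comm 2 M, Real.rpow_mul (norm_nonneg z), Real.rpow_two, inv_pow]
  simp only [hweight]
  exact BallIntegralVanishesToInfiniteOrder.rpow_neg_mul hflat (fun z => sq_nonneg _) hr₁ hint
    (by positivity)

/-- if `u` is square integrable near `0 ∈ ℂⁿ` and vanishes to infinite
order in the `L²` sense at `0`, then for every `M > 0` so does `u z / |z|^M`. -/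
theorem stmt4 (n : ℕ) (hn : 1 ≤ n) (u : EuclideanSpace ℂ (Fin n) → ℂ)
    (hmeas : Measurable u) (r₁ : ℝ) (hr₁ : 0 < r₁)
    (hint : IntegrableOn (fun z => ‖u z‖ ^ 2) (ball (0 : EuclideanSpace ℂ (Fin n)) r₁))
    (hflat : ∀ m : ℕ, 1 ≤ m →
      Tendsto (fun r : ℝ => (∫ z in ball (0 : EuclideanSpace ℂ (Fin n)) r, ‖u z‖ ^ 2) / r ^ m)
        (𝓝[>] 0) (𝓝 0)) :
    ∀ M : ℝ, 0 < M →
      (∃ r : ℝ, 0 < r ∧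
        IntegrableOn (fun z => ‖(‖z‖ ^ M)⁻¹ • u z‖ ^ 2)
          (ball (0 : EuclideanSpace ℂ (Fin n)) r)) ∧
      (∀ m : ℕ, 1 ≤ m →
        Tendsto
          (fun r : ℝ =>
            (∫ z in ball (0 : EuclideanSpace ℂ (Fin n)) r, ‖(‖z‖ ^ M)⁻¹ • u z‖ ^ 2) / r ^ m)
          (𝓝[>] 0) (𝓝 0)) :=
  stmt4_general n u r₁ hr₁ hint hflat
end
end

section
/- Let Ω be a bounded domain in ℂⁿ (n ≥ 1) and let α, β > 0 satisfy α + β = 2n. Then there exists a constant C > 0 such that for every z ∈ Ω with z ≠ 0, ∫_Ω |ζ|^{−α} |ζ − z|^{−β} dv_ζ ≤ C·(1 + |ln |z||). -/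
/-!
Whichever of `|ζ|`, `|ζ - z|` is the larger is at least `ρ = |z| / 2`, because their sum is at
least `|z|`. Hence the integrand is at most `k_{α,β}(|ζ|) + k_{β,α}(|ζ - z|)` with the radial
kernel `k_{α,β}(t) = t^{-α} max(t, ρ)^{-β}`. With `d = α + β` the real dimension, polar coordinates
on a ball of radius `T ≥ ρ` give
`∫_{|x| < T} k_{α,β}(|x|) dx = d |B₁| (∫₀^ρ ρ^{-β} t^{β-1} dt + ∫_ρ^T dt / t)`,
which is `d |B₁| (1/β + log (T/ρ))`, and `log (T/ρ) ≤ log (2T) + |log |z||`.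
-/

open MeasureTheory Metric Filter Topology

noncomputable section

open Set Real
open scoped ENNReal

theorem lintegral_Ioc_ofReal_rpow_sub_one {β ρ : ℝ} (hβ : 0 < β) (hρ : 0 ≤ ρ) :
    ∫⁻ y in Ioc 0 ρ, ENNReal.ofReal (y ^ (β - 1)) = ENNReal.ofReal (ρ ^ β / β) := by
  rw [← ofReal_integral_eq_lintegral_ofReal
      (intervalIntegral.intervalIntegrable_rpow' (by linarith)).1,
    ← intervalIntegral.integral_of_le hρ, integral_rpow (Or.inl (by linarith))]
  · simp [zero_rpow hβ.ne']
  · filter_upwards [ae_restrict_mem measurableSet_Ioc] with y hy using rpow_nonneg hy.1.le _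

theorem lintegral_Ioc_ofReal_inv {a b : ℝ} (ha : 0 < a) (hab : a ≤ b) :
    ∫⁻ y in Ioc a b, ENNReal.ofReal y⁻¹ = ENNReal.ofReal (log (b / a)) := by
  have hpos : ∀ y ∈ uIcc a b, 0 < y := fun y hy ↦ ha.trans_le (by simpa [hab] using hy.1)
  rw [← ofReal_integral_eq_lintegral_ofReal
      (intervalIntegral.intervalIntegrable_inv (fun y hy ↦ (hpos y hy).ne') continuousOn_id).1,
    ← intervalIntegral.integral_of_le hab, integral_inv_of_pos ha (ha.trans_le hab)]
  filter_upwards [ae_restrict_mem measurableSet_Ioc] with y hy using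
    inv_nonneg.2 (ha.trans hy.1).le

theorem lintegral_Ioo_pow_mul_rpow_mul_max_rpow_le {d : ℕ} {α β ρ T : ℝ} (hα : 0 < α)
    (hβ : 0 < β) (hαβ : α + β = d) (hρ : 0 < ρ) (hρT : ρ ≤ T) :
    ∫⁻ y in Ioo 0 T,
        ENNReal.ofReal (y ^ (d - 1)) * ENNReal.ofReal (y ^ (-α) * max y ρ ^ (-β)) ≤
      ENNReal.ofReal (1 / β + log (T / ρ)) := by
  have hd : 1 ≤ d := Nat.one_le_iff_ne_zero.2 fun h ↦ by simp [h] at hαβ; linarith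
  have hpow : ∀ y : ℝ, 0 < y → y ^ (d - 1) * y ^ (-α) = y ^ (β - 1) := by
    intro y hy
    rw [← rpow_natCast, Nat.cast_sub hd, ← rpow_add hy]
    congr 1
    push_cast
    linarith
  have hnear : ∀ y ∈ Ioc 0 ρ,
      ENNReal.ofReal (y ^ (d - 1)) * ENNReal.ofReal (y ^ (-α) * max y ρ ^ (-β)) =
        ENNReal.ofReal (ρ ^ (-β)) * ENNReal.ofReal (y ^ (β - 1)) := by
    rintro y ⟨hy0, hyρ⟩
    rw [max_eq_right hyρ, ← ENNReal.ofReal_mul (by positivity),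
      ← ENNReal.ofReal_mul (by positivity), ← mul_assoc, hpow y hy0, mul_comm]
  have hfar : ∀ y ∈ Ioc ρ T,
      ENNReal.ofReal (y ^ (d - 1)) * ENNReal.ofReal (y ^ (-α) * max y ρ ^ (-β)) =
        ENNReal.ofReal y⁻¹ := by
    rintro y ⟨hρy, -⟩
    have hy0 := hρ.trans hρy
    rw [max_eq_left hρy.le, ← ENNReal.ofReal_mul (by positivity), ← mul_assoc, hpow y hy0,
      ← rpow_add hy0, show β - 1 + -β = -1 by ring, rpow_neg_one]
  calc _ ≤ ∫⁻ y in Ioc 0 ρ ∪ Ioc ρ T,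
        ENNReal.ofReal (y ^ (d - 1)) * ENNReal.ofReal (y ^ (-α) * max y ρ ^ (-β)) := by
        rw [Ioc_union_Ioc_eq_Ioc hρ.le hρT]
        exact lintegral_mono_set Ioo_subset_Ioc_self
    _ ≤ _ := lintegral_union_le _ _ _
    _ = ENNReal.ofReal (ρ ^ (-β)) * ENNReal.ofReal (ρ ^ β / β) +
          ENNReal.ofReal (log (T / ρ)) := by
        rw [setLIntegral_congr_fun measurableSet_Ioc hnear,
          lintegral_const_mul' _ _ ENNReal.ofReal_ne_top,
          lintegral_Ioc_ofReal_rpow_sub_one hβ hρ.le,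
          setLIntegral_congr_fun measurableSet_Ioc hfar, lintegral_Ioc_ofReal_inv hρ hρT]
    _ = _ := by
        rw [← ENNReal.ofReal_mul (by positivity), ← mul_div_assoc, ← rpow_add hρ,
          neg_add_cancel, rpow_zero,
          ENNReal.ofReal_add (by positivity) (log_nonneg ((one_le_div hρ).2 hρT))]

section Radial

variable {E : Type*} [NormedAddCommGroup E] [NormedSpace ℝ E] [MeasurableSpace E]
  [BorelSpace E] [FiniteDimensional ℝ E] (μ : Measure E) [μ.IsAddHaarMeasure]

theorem lintegral_fun_norm_addHaar [Nontrivial E] {f : ℝ → ℝ≥0∞} (hf : Measurable f) :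
    ∫⁻ x, f ‖x‖ ∂μ = Module.finrank ℝ E * μ (ball 0 1) *
      ∫⁻ y in Ioi 0, ENNReal.ofReal (y ^ (Module.finrank ℝ E - 1)) * f y := by
  have hf' : Measurable fun y : Ioi (0 : ℝ) ↦ f y := hf.comp measurable_subtype_coe
  calc ∫⁻ x, f ‖x‖ ∂μ = ∫⁻ x : ({(0)}ᶜ : Set E), f ‖x.1‖ ∂(μ.comap (↑)) := by
        rw [lintegral_subtype_comap (measurableSet_singleton _).compl fun x ↦ f ‖x‖,
          restrict_compl_singleton]
    _ = ∫⁻ p, f p.2 ∂(μ.toSphere.prod (.volumeIoiPow (Module.finrank ℝ E - 1))) := by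
        simpa using μ.measurePreserving_homeomorphUnitSphereProd.lintegral_comp_emb
          (Homeomorph.measurableEmbedding _) (fun p ↦ f p.2)
    _ = μ.toSphere univ * ∫⁻ y, f y ∂(.volumeIoiPow (Module.finrank ℝ E - 1)) := by
        rw [lintegral_prod (f := fun p : sphere (0 : E) 1 × Ioi (0 : ℝ) ↦ f p.2)
          (hf'.comp measurable_snd).aemeasurable]
        simp only [lintegral_const, mul_comm]
    _ = _ := by
        rw [Measure.toSphere_apply_univ, Measure.volumeIoiPow,
          lintegral_withDensity_eq_lintegral_mul _ (by fun_prop) hf',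
          ← lintegral_subtype_comap measurableSet_Ioi]
        rfl

theorem setLIntegral_ball_fun_norm_addHaar [Nontrivial E] {f : ℝ → ℝ≥0∞} (hf : Measurable f)
    (T : ℝ) :
    ∫⁻ x in ball 0 T, f ‖x‖ ∂μ = Module.finrank ℝ E * μ (ball 0 1) *
      ∫⁻ y in Ioo 0 T, ENNReal.ofReal (y ^ (Module.finrank ℝ E - 1)) * f y := by
  have hball : ∫⁻ x in ball 0 T, f ‖x‖ ∂μ = ∫⁻ x, (Iio T).indicator f ‖x‖ ∂μ := by
    rw [← lintegral_indicator measurableSet_ball]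
    congr 1 with x
    by_cases hx : ‖x‖ < T <;> simp [indicator, hx]
  rw [hball, lintegral_fun_norm_addHaar μ (hf.indicator measurableSet_Iio)]
  have hmul : ∀ y, ENNReal.ofReal (y ^ (Module.finrank ℝ E - 1)) * (Iio T).indicator f y =
      (Iio T).indicator (fun y ↦ ENNReal.ofReal (y ^ (Module.finrank ℝ E - 1)) * f y) y :=
    fun y ↦ (indicator_mul_right (Iio T) (fun y ↦ ENNReal.ofReal (y ^ _)) f).symm
  simp_rw [hmul]
  rw [lintegral_indicator measurableSet_Iio, Measure.restrict_restrict measurableSet_Iio,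
    Iio_inter_Ioi]

variable {μ} {α β : ℝ}

theorem setLIntegral_ball_rpow_norm_mul_max_rpow_le [Nontrivial E] (hα : 0 < α) (hβ : 0 < β)
    (hαβ : α + β = Module.finrank ℝ E) {ρ T : ℝ} (hρ : 0 < ρ) (hρT : ρ ≤ T) :
    ∫⁻ x in ball 0 T, ENNReal.ofReal (‖x‖ ^ (-α) * max ‖x‖ ρ ^ (-β)) ∂μ ≤
      Module.finrank ℝ E * μ (ball 0 1) * ENNReal.ofReal (1 / β + log (T / ρ)) := by
  rw [setLIntegral_ball_fun_norm_addHaar μ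
    (f := fun y ↦ ENNReal.ofReal (y ^ (-α) * max y ρ ^ (-β))) (by fun_prop) T]
  gcongr
  exact lintegral_Ioo_pow_mul_rpow_mul_max_rpow_le hα hβ hαβ hρ hρT

end Radial

theorem setLIntegral_ball_comp_sub_le {E : Type*} [NormedAddCommGroup E] [MeasurableSpace E]
    [BorelSpace E] {μ : Measure E} [μ.IsAddRightInvariant] (g : E → ℝ≥0∞) (z : E) (R : ℝ) :
    ∫⁻ ζ in ball 0 R, g (ζ - z) ∂μ ≤ ∫⁻ w in ball 0 (R + ‖z‖), g w ∂μ := by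
  calc ∫⁻ ζ in ball 0 R, g (ζ - z) ∂μ
      ≤ ∫⁻ ζ, (ball 0 (R + ‖z‖)).indicator g (ζ - z) ∂μ := by
        rw [← lintegral_indicator measurableSet_ball]
        refine lintegral_mono fun ζ ↦ ?_
        by_cases hζ : ζ ∈ ball (0 : E) R
        · have : ζ - z ∈ ball (0 : E) (R + ‖z‖) := by
            rw [mem_ball_zero_iff] at hζ ⊢
            exact (norm_sub_le ζ z).trans_lt (by linarith)
          simp [hζ, this]
        · simp [hζ]
    _ = ∫⁻ w in ball 0 (R + ‖z‖), g w ∂μ := by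
        rw [lintegral_sub_right_eq_self, lintegral_indicator measurableSet_ball]

theorem rpow_neg_mul_rpow_neg_le_mul_max {a b ρ α β : ℝ} (ha : 0 ≤ a) (hρ : 0 < ρ)
    (hab : a ≤ b) (hρb : ρ ≤ b) (hβ : 0 ≤ β) :
    a ^ (-α) * b ^ (-β) ≤ a ^ (-α) * max a ρ ^ (-β) :=
  mul_le_mul_of_nonneg_left
    (rpow_le_rpow_of_nonpos (lt_max_of_lt_right hρ) (max_le hab hρb) (neg_nonpos.2 hβ))
    (rpow_nonneg ha _)

theorem ofReal_rpow_norm_mul_rpow_norm_sub_le {E : Type*} [NormedAddCommGroup E] {α β : ℝ}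
    (hα : 0 ≤ α) (hβ : 0 ≤ β) {z : E} (hz : z ≠ 0) (ζ : E) :
    ENNReal.ofReal (‖ζ‖ ^ (-α) * ‖ζ - z‖ ^ (-β)) ≤
      ENNReal.ofReal (‖ζ‖ ^ (-α) * max ‖ζ‖ (‖z‖ / 2) ^ (-β)) +
        ENNReal.ofReal (‖ζ - z‖ ^ (-β) * max ‖ζ - z‖ (‖z‖ / 2) ^ (-α)) := by
  have hρ : 0 < ‖z‖ / 2 := by positivity
  have htri := norm_le_norm_add_norm_sub ζ z
  rcases le_total ‖ζ‖ ‖ζ - z‖ with h | h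
  · refine le_add_right (ENNReal.ofReal_le_ofReal ?_)
    exact rpow_neg_mul_rpow_neg_le_mul_max (norm_nonneg _) hρ h (by linarith) hβ
  · refine le_add_left (ENNReal.ofReal_le_ofReal ?_)
    rw [mul_comm]
    exact rpow_neg_mul_rpow_neg_le_mul_max (norm_nonneg _) hρ h (by linarith) hα

section Kernel

variable {E : Type*} [NormedAddCommGroup E] [NormedSpace ℝ E] [MeasurableSpace E]
  [BorelSpace E] [FiniteDimensional ℝ E] (μ : Measure E) [μ.IsAddHaarMeasure] {α β : ℝ}

theorem setLIntegral_ball_rpow_norm_mul_rpow_norm_sub_le [Nontrivial E] (hα : 0 < α)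
    (hβ : 0 < β) (hαβ : α + β = Module.finrank ℝ E) {z : E} (hz : z ≠ 0) {R : ℝ}
    (hzR : ‖z‖ ≤ R) :
    ∫⁻ ζ in ball 0 R, ENNReal.ofReal (‖ζ‖ ^ (-α) * ‖ζ - z‖ ^ (-β)) ∂μ ≤
      Module.finrank ℝ E * μ (ball 0 1) *
        ENNReal.ofReal (1 / α + 1 / β + 2 * log (4 * R / ‖z‖)) := by
  have hρ : 0 < ‖z‖ / 2 := by positivity
  have hρR : ‖z‖ / 2 ≤ 2 * R := by linarith [norm_nonneg z]
  have hlog : 0 ≤ log (2 * R / (‖z‖ / 2)) := log_nonneg ((one_le_div hρ).2 hρR)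
  calc ∫⁻ ζ in ball 0 R, ENNReal.ofReal (‖ζ‖ ^ (-α) * ‖ζ - z‖ ^ (-β)) ∂μ
      ≤ ∫⁻ ζ in ball 0 R, (ENNReal.ofReal (‖ζ‖ ^ (-α) * max ‖ζ‖ (‖z‖ / 2) ^ (-β)) +
          ENNReal.ofReal (‖ζ - z‖ ^ (-β) * max ‖ζ - z‖ (‖z‖ / 2) ^ (-α))) ∂μ :=
        lintegral_mono (ofReal_rpow_norm_mul_rpow_norm_sub_le hα.le hβ.le hz)
    _ = ∫⁻ ζ in ball 0 R, ENNReal.ofReal (‖ζ‖ ^ (-α) * max ‖ζ‖ (‖z‖ / 2) ^ (-β)) ∂μ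
          + ∫⁻ ζ in ball 0 R,
            ENNReal.ofReal (‖ζ - z‖ ^ (-β) * max ‖ζ - z‖ (‖z‖ / 2) ^ (-α)) ∂μ :=
        lintegral_add_left (by fun_prop) _
    _ ≤ ∫⁻ w in ball 0 (2 * R), ENNReal.ofReal (‖w‖ ^ (-α) * max ‖w‖ (‖z‖ / 2) ^ (-β)) ∂μ
          + ∫⁻ w in ball 0 (2 * R),
            ENNReal.ofReal (‖w‖ ^ (-β) * max ‖w‖ (‖z‖ / 2) ^ (-α)) ∂μ := by
        gcongr ?_ + ?_
        · exact lintegral_mono_set (ball_subset_ball (by linarith [norm_nonneg z]))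
        · exact (setLIntegral_ball_comp_sub_le
            (fun w ↦ ENNReal.ofReal (‖w‖ ^ (-β) * max ‖w‖ (‖z‖ / 2) ^ (-α))) z R).trans
            (lintegral_mono_set (ball_subset_ball (by linarith)))
    _ ≤ Module.finrank ℝ E * μ (ball 0 1) * ENNReal.ofReal (1 / β + log (2 * R / (‖z‖ / 2)))
          + Module.finrank ℝ E * μ (ball 0 1) *
            ENNReal.ofReal (1 / α + log (2 * R / (‖z‖ / 2))) :=
        add_le_add (setLIntegral_ball_rpow_norm_mul_max_rpow_le hα hβ hαβ hρ hρR)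
          (setLIntegral_ball_rpow_norm_mul_max_rpow_le hβ hα (by linarith) hρ hρR)
    _ = _ := by
        rw [← mul_add, ← ENNReal.ofReal_add (add_nonneg (by positivity) hlog)
          (add_nonneg (by positivity) hlog)]
        congr 2
        rw [show 2 * R / (‖z‖ / 2) = 4 * R / ‖z‖ by field_simp; ring]
        ring

theorem exists_setLIntegral_rpow_norm_mul_rpow_norm_sub_le {Ω : Set E}
    (hΩ : Bornology.IsBounded Ω) (hα : 0 < α) (hβ : 0 < β) (hαβ : α + β = Module.finrank ℝ E) :
    ∃ C : ℝ, 0 < C ∧ ∀ z ∈ Ω, z ≠ 0 →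
      ∫⁻ ζ in Ω, ENNReal.ofReal (‖ζ‖ ^ (-α) * ‖ζ - z‖ ^ (-β)) ∂μ ≤
        ENNReal.ofReal (C * (1 + |log ‖z‖|)) := by
  have : Nontrivial E := Module.nontrivial_of_finrank_pos (by exact_mod_cast hαβ ▸ add_pos hα hβ)
  obtain ⟨R₀, hΩR₀⟩ := hΩ.subset_ball 0
  set R := max R₀ 1
  have hΩR : Ω ⊆ ball 0 R := hΩR₀.trans (ball_subset_ball (le_max_left _ _))
  have hlogR : 0 ≤ log (4 * R) := log_nonneg (by linarith [le_max_right R₀ 1])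
  set c := (Module.finrank ℝ E * μ (ball 0 1)).toReal
  have hc : 0 < c := ENNReal.toReal_pos
    (mul_ne_zero (by exact_mod_cast Module.finrank_pos.ne') (measure_ball_pos μ 0 one_pos).ne')
    (ENNReal.mul_ne_top (ENNReal.natCast_ne_top _) measure_ball_lt_top.ne)
  refine ⟨c * (1 / α + 1 / β + 2 * log (4 * R) + 2), by positivity, fun z hz hz0 ↦ ?_⟩
  have hr : 0 < ‖z‖ := norm_pos_iff.2 hz0
  have hlog : 1 / α + 1 / β + 2 * log (4 * R / ‖z‖) ≤
      (1 / α + 1 / β + 2 * log (4 * R) + 2) * (1 + |log ‖z‖|) := by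
    rw [log_div (by linarith [le_max_right R₀ 1]) hr.ne']
    have : 0 ≤ (1 / α + 1 / β + 2 * log (4 * R)) * |log ‖z‖| := by positivity
    nlinarith [neg_le_abs (log ‖z‖), abs_nonneg (log ‖z‖)]
  calc ∫⁻ ζ in Ω, ENNReal.ofReal (‖ζ‖ ^ (-α) * ‖ζ - z‖ ^ (-β)) ∂μ
      ≤ ∫⁻ ζ in ball 0 R, ENNReal.ofReal (‖ζ‖ ^ (-α) * ‖ζ - z‖ ^ (-β)) ∂μ :=
        lintegral_mono_set hΩR
    _ ≤ Module.finrank ℝ E * μ (ball 0 1) *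
          ENNReal.ofReal (1 / α + 1 / β + 2 * log (4 * R / ‖z‖)) :=
        setLIntegral_ball_rpow_norm_mul_rpow_norm_sub_le μ hα hβ hαβ hz0
          (mem_ball_zero_iff.1 (hΩR hz)).le
    _ = ENNReal.ofReal (c * (1 / α + 1 / β + 2 * log (4 * R / ‖z‖))) := by
        rw [ENNReal.ofReal_mul hc.le, ENNReal.ofReal_toReal
          (ENNReal.mul_ne_top (ENNReal.natCast_ne_top _) measure_ball_lt_top.ne)]
    _ ≤ _ := by
        rw [mul_assoc]
        exact ENNReal.ofReal_le_ofReal (mul_le_mul_of_nonneg_left hlog hc.le)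

end Kernel

instance (n : ℕ) : (volume : Measure (EuclideanSpace ℂ (Fin n))).IsAddHaarMeasure :=
  (PiLp.continuousLinearEquiv 2 ℝ (fun _ : Fin n => ℂ)).symm.isAddHaarMeasure_map volume

theorem finrank_euclideanSpace_complex (n : ℕ) :
    Module.finrank ℝ (EuclideanSpace ℂ (Fin n)) = 2 * n := by
  rw [← Module.finrank_mul_finrank ℝ ℂ, Complex.finrank_real_complex, finrank_euclideanSpace,
    Fintype.card_fin]

theorem stmt6_general (n : ℕ) (Ω : Set (EuclideanSpace ℂ (Fin n)))
    (hΩb : Bornology.IsBounded Ω)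
    (α β : ℝ) (hα : 0 < α) (hβ : 0 < β) (hαβ : α + β = 2 * n) :
    ∃ C : ℝ, 0 < C ∧ ∀ z ∈ Ω, z ≠ 0 →
      ∫⁻ ζ in Ω, ENNReal.ofReal (‖ζ‖ ^ (-α) * ‖ζ - z‖ ^ (-β)) ≤
        ENNReal.ofReal (C * (1 + |Real.log ‖z‖|)) :=
  exists_setLIntegral_rpow_norm_mul_rpow_norm_sub_le volume hΩb hα hβ
    (by rw [finrank_euclideanSpace_complex]; push_cast; exact hαβ)

/-- for a bounded domain `Ω ⊆ ℂⁿ` and `α, β > 0` with `α + β = 2n`, there is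
`C > 0` with `∫_Ω |ζ|^{-α} |ζ - z|^{-β} dv_ζ ≤ C (1 + |ln |z||)` for every `z ∈ Ω`, `z ≠ 0`. -/
theorem stmt6 (n : ℕ) (hn : 1 ≤ n) (Ω : Set (EuclideanSpace ℂ (Fin n)))
    (hΩo : IsOpen Ω) (hΩc : IsConnected Ω) (hΩb : Bornology.IsBounded Ω)
    (α β : ℝ) (hα : 0 < α) (hβ : 0 < β) (hαβ : α + β = 2 * n) :
    ∃ C : ℝ, 0 < C ∧ ∀ z ∈ Ω, z ≠ 0 →
      ∫⁻ ζ in Ω, ENNReal.ofReal (‖ζ‖ ^ (-α) * ‖ζ - z‖ ^ (-β)) ≤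
        ENNReal.ofReal (C * (1 + |Real.log ‖z‖|)) :=
  stmt6_general n Ω hΩb α β hα hβ hαβ
end
end

section
/- Let N ≥ 1 and let f : ℝ → ℂ^N be infinitely differentiable with compact support contained in the open half-line (−∞, 0). Then for all real numbers λ and k, ∫_{−∞}^0 e^{−2λt} |f′(t) + k·f(t)|² dt ≥ (λ + k)² ∫_{−∞}^0 e^{−2λt} |f(t)|² dt. -/
open MeasureTheory Filter Topology

open scoped InnerProductSpace

/-!
Write `c = λ + k` and `w(t) = e^{-2λt}`. Splitting `f' + k f = (f' - λ f) + c f` gives the pointwise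
identity
`w |f' + k f|² = c² w |f|² + c (w |f|²)' + w |f' - λ f|²`,
since `(w |f|²)' = 2 w ⟪f' - λ f, f⟫`. Integrating over `(-∞, 0)`, the middle term contributes
`c · w(0) |f(0)|² = 0`, and the last term is nonnegative.
-/

theorem HasCompactSupport.exp_mul_norm_sq {E : Type*} [NormedAddCommGroup E] {f : ℝ → E}
    (hf : HasCompactSupport f) (lam : ℝ) :
    HasCompactSupport (fun t => Real.exp (-2 * lam * t) * ‖f t‖ ^ 2) :=
  (hf.comp_left (g := fun x : E => ‖x‖ ^ 2) (by simp)).mul_left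

theorem Continuous.integrable_exp_mul_norm_sq {E : Type*} [NormedAddCommGroup E] {f : ℝ → E}
    (hf : Continuous f) (hsupp : HasCompactSupport f) (lam : ℝ) :
    Integrable (fun t => Real.exp (-2 * lam * t) * ‖f t‖ ^ 2) :=
  (by fun_prop : Continuous _).integrable_of_hasCompactSupport (hsupp.exp_mul_norm_sq lam)

section WeightedEnergy

variable {E : Type*} [NormedAddCommGroup E] [InnerProductSpace ℝ E]

theorem norm_add_smul_sq_eq (v x : E) (lam k : ℝ) :
    ‖v + k • x‖ ^ 2 = (lam + k) ^ 2 * ‖x‖ ^ 2 + (lam + k) * (2 * ⟪v - lam • x, x⟫_ℝ)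
      + ‖v - lam • x‖ ^ 2 := by
  have hsplit : v + k • x = (v - lam • x) + (lam + k) • x := by module
  rw [hsplit, norm_add_sq_real, real_inner_smul_right, norm_smul, Real.norm_eq_abs, mul_pow,
    sq_abs]
  ring

theorem HasDerivAt.exp_mul_norm_sq {f : ℝ → E} {f' : E} {t : ℝ} (hf : HasDerivAt f f' t)
    (lam : ℝ) :
    HasDerivAt (fun t => Real.exp (-2 * lam * t) * ‖f t‖ ^ 2)
      (Real.exp (-2 * lam * t) * (2 * ⟪f' - lam • f t, f t⟫_ℝ)) t := by
  have hexp : HasDerivAt (fun t => Real.exp (-2 * lam * t))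
      (Real.exp (-2 * lam * t) * (-2 * lam)) t := by
    simpa using ((hasDerivAt_id t).const_mul (-2 * lam)).exp
  refine (hexp.mul hf.norm_sq).congr_deriv ?_
  rw [inner_sub_left, real_inner_smul_left, real_inner_self_eq_norm_sq, real_inner_comm]
  ring

theorem deriv_exp_mul_norm_sq {f : ℝ → E} (hf : Differentiable ℝ f) (lam : ℝ) :
    deriv (fun t => Real.exp (-2 * lam * t) * ‖f t‖ ^ 2) =
      fun t => Real.exp (-2 * lam * t) * (2 * ⟪deriv f t - lam • f t, f t⟫_ℝ) :=
  funext fun t => ((hf t).hasDerivAt.exp_mul_norm_sq lam).deriv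

theorem ContDiff.exp_mul_norm_sq {f : ℝ → E} (hf : ContDiff ℝ 1 f) (lam : ℝ) :
    ContDiff ℝ 1 (fun t => Real.exp (-2 * lam * t) * ‖f t‖ ^ 2) :=
  (Real.contDiff_exp.comp (contDiff_const.mul contDiff_id)).mul (hf.norm_sq ℝ)

theorem integral_Iio_exp_mul_norm_sq_le {f : ℝ → E} (hf : ContDiff ℝ 1 f)
    (hsupp : HasCompactSupport f) (h0 : f 0 = 0) (lam k : ℝ) :
    (lam + k) ^ 2 * ∫ t in Set.Iio (0 : ℝ), Real.exp (-2 * lam * t) * ‖f t‖ ^ 2 ≤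
      ∫ t in Set.Iio (0 : ℝ), Real.exp (-2 * lam * t) * ‖deriv f t + k • f t‖ ^ 2 := by
  set w : ℝ → ℝ := fun t => Real.exp (-2 * lam * t)
  have hderiv := deriv_exp_mul_norm_sq (hf.differentiable one_ne_zero) lam
  have hφ := hf.exp_mul_norm_sq lam
  have hφsupp := hsupp.exp_mul_norm_sq lam
  have hcross_int : Integrable fun t => w t * (2 * ⟪deriv f t - lam • f t, f t⟫_ℝ) :=
    hderiv ▸ (hφ.continuous_deriv le_rfl).integrable_of_hasCompactSupport hφsupp.deriv
  have hcross_zero :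
      ∫ t in Set.Iio (0 : ℝ), w t * (2 * ⟪deriv f t - lam • f t, f t⟫_ℝ) = 0 := by
    rw [← hderiv, ← integral_Iic_eq_integral_Iio, hφsupp.integral_Iic_deriv_eq hφ, h0]
    simp
  have hmain_int := hf.continuous.integrable_exp_mul_norm_sq hsupp lam
  have hrest_int :=
    ((hf.continuous_deriv le_rfl).sub (hf.continuous.const_smul lam)).integrable_exp_mul_norm_sq
      (hsupp.deriv.sub (hsupp.smul_left (f := fun _ => lam))) lam
  calc (lam + k) ^ 2 * ∫ t in Set.Iio (0 : ℝ), w t * ‖f t‖ ^ 2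
      ≤ (lam + k) ^ 2 * (∫ t in Set.Iio (0 : ℝ), w t * ‖f t‖ ^ 2)
        + (lam + k) * (∫ t in Set.Iio (0 : ℝ), w t * (2 * ⟪deriv f t - lam • f t, f t⟫_ℝ))
        + ∫ t in Set.Iio (0 : ℝ), w t * ‖deriv f t - lam • f t‖ ^ 2 := by
        rw [hcross_zero, mul_zero, add_zero]
        exact le_add_of_nonneg_right <|
          setIntegral_nonneg measurableSet_Iio fun t _ => by positivity
    _ = ∫ t in Set.Iio (0 : ℝ), ((lam + k) ^ 2 * (w t * ‖f t‖ ^ 2)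
          + (lam + k) * (w t * (2 * ⟪deriv f t - lam • f t, f t⟫_ℝ))
          + w t * ‖deriv f t - lam • f t‖ ^ 2) := by
        rw [integral_add, integral_add, integral_const_mul, integral_const_mul]
        · exact (hmain_int.const_mul _).integrableOn
        · exact (hcross_int.const_mul _).integrableOn
        · exact ((hmain_int.const_mul _).add (hcross_int.const_mul _)).integrableOn
        · exact hrest_int.integrableOn
    _ = ∫ t in Set.Iio (0 : ℝ), w t * ‖deriv f t + k • f t‖ ^ 2 := by
        refine setIntegral_congr_fun measurableSet_Iio fun t _ => ?_
        rw [norm_add_smul_sq_eq (deriv f t) (f t) lam k]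
        ring

end WeightedEnergy

attribute [local instance] InnerProductSpace.complexToReal

theorem stmt7_general (N : ℕ) (f : ℝ → EuclideanSpace ℂ (Fin N))
    (hf : ContDiff ℝ (⊤ : ℕ∞) f) (hsupp : HasCompactSupport f)
    (hsub : tsupport f ⊆ Set.Iio (0 : ℝ)) :
    ∀ lam k : ℝ,
      (lam + k) ^ 2 * ∫ t in Set.Iio (0 : ℝ), Real.exp (-2 * lam * t) * ‖f t‖ ^ 2 ≤
        ∫ t in Set.Iio (0 : ℝ), Real.exp (-2 * lam * t) * ‖deriv f t + k • f t‖ ^ 2 :=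
  integral_Iio_exp_mul_norm_sq_le (hf.of_le (by exact_mod_cast le_top)) hsupp
    (image_eq_zero_of_notMem_tsupport fun h => Set.self_notMem_Iio (hsub h))

/-- for `f ∈ C_c^∞((-∞,0), ℂ^N)` and all `λ, k ∈ ℝ`,
`∫_{-∞}^0 e^{-2λt} |f'(t) + k f(t)|² dt ≥ (λ+k)² ∫_{-∞}^0 e^{-2λt} |f(t)|² dt`. -/
theorem stmt7 (N : ℕ) (hN : 1 ≤ N) (f : ℝ → EuclideanSpace ℂ (Fin N))
    (hf : ContDiff ℝ (⊤ : ℕ∞) f) (hsupp : HasCompactSupport f)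
    (hsub : tsupport f ⊆ Set.Iio (0 : ℝ)) :
    ∀ lam k : ℝ,
      (lam + k) ^ 2 * ∫ t in Set.Iio (0 : ℝ), Real.exp (-2 * lam * t) * ‖f t‖ ^ 2 ≤
        ∫ t in Set.Iio (0 : ℝ), Real.exp (-2 * lam * t) * ‖deriv f t + k • f t‖ ^ 2 :=
  stmt7_general N f hf hsupp hsub
end
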